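/- arXiv:1003.0747 — 2 statements merged into one kernel-verified Lean document; each statement's English description precedes it below -/
import Mathlib

section
/- In the one-sided Laplace location model with shift $\theta > 0$, the distribution function of one-sided p-values under the alternative is: $G_1^+(u) = u e^{\theta}$ for $0 \le u \le \frac{1}{2}e^{-\theta}$; $G_1^+(u) = 1 - \frac{e^{-\theta}}{4u}$ for $\frac{1}{2}e^{-\theta} \le u \le \frac{1}{2}$; and $G_1^+(u) = 1 - (1-u)e^{-\theta}$ for $\frac{1}{2} \le u \le 1$. -/
open MeasureTheory Set Real

noncomputable def lap (t : ℝ) : ℝ := (1/2) * Real.exp (-|t|)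

lemma lap_cont : Continuous lap := by
  unfold lap; continuity

lemma lap_nonneg (t : ℝ) : 0 ≤ lap t := by unfold lap; positivity

lemma lap_integrableOn_Iic (x : ℝ) : IntegrableOn lap (Iic x) := by
  refine ((integrableOn_exp_Iic x).const_mul (1/2)).mono' 
    (lap_cont.aestronglyMeasurable.restrict) ?_
  filter_upwards with t
  have h1 : -|t| ≤ t := neg_abs_le t
  have : Real.exp (-|t|) ≤ Real.exp t := Real.exp_le_exp.2 h1
  rw [Real.norm_eq_abs, abs_of_nonneg (lap_nonneg t)]
  unfold lap; nlinarith [Real.exp_pos t]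

lemma lap_integrableOn_Ioi (x : ℝ) : IntegrableOn lap (Ioi x) := by
  refine ((exp_neg_integrableOn_Ioi x one_pos).const_mul (1/2)).mono'
    (lap_cont.aestronglyMeasurable.restrict) ?_
  filter_upwards with t
  have h1 : -|t| ≤ -t := neg_le_neg (le_abs_self t)
  have : Real.exp (-|t|) ≤ Real.exp (-t) := Real.exp_le_exp.2 h1
  rw [Real.norm_eq_abs, abs_of_nonneg (lap_nonneg t)]
  unfold lap
  nlinarith [Real.exp_pos (-t), Real.exp_pos (-1 * t), (by ring_nf : Real.exp (-1 * t) = Real.exp (-t))]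

lemma lap_int : Integrable lap := by
  rw [← integrableOn_univ, ← Iic_union_Ioi (a := (0:ℝ))]
  exact (lap_integrableOn_Iic 0).union (lap_integrableOn_Ioi 0)

lemma lap_Iic (x : ℝ) : ∫ t in Iic x, lap t = if x ≤ 0 then Real.exp x / 2 else 1 - Real.exp (-x) / 2 := by
  by_cases hx : x ≤ 0
  · rw [if_pos hx]
    rw [setIntegral_congr_fun measurableSet_Iic (g := fun t => (1/2) * Real.exp t)
      (fun t ht => by unfold lap; rw [abs_of_nonpos (le_trans ht hx), neg_neg])]
    rw [integral_const_mul, integral_exp_Iic]; ring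
  · rw [if_neg hx]
    push_neg at hx
    have h0 : ∫ t in Iic (0:ℝ), lap t = 1/2 := by
      rw [setIntegral_congr_fun measurableSet_Iic (g := fun t => (1/2) * Real.exp t)
        (fun t ht => by unfold lap; rw [abs_of_nonpos ht, neg_neg])]
      rw [integral_const_mul, integral_exp_Iic]; norm_num
    have hs := intervalIntegral.integral_Iic_sub_Iic (lap_integrableOn_Iic 0) (lap_integrableOn_Iic x)
    have hIcc : ∫ t in (0:ℝ)..x, lap t = ∫ t in (0:ℝ)..x, (1/2) * Real.exp (-t) := by
      refine intervalIntegral.integral_congr (fun t ht => ?_)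
      rw [uIcc_of_le hx.le] at ht
      unfold lap; rw [abs_of_nonneg ht.1]
    have hval : ∫ t in (0:ℝ)..x, (1/2) * Real.exp (-t) = 1/2 - Real.exp (-x) / 2 := by
      rw [intervalIntegral.integral_const_mul]
      have := intervalIntegral.integral_comp_neg (a := (0:ℝ)) (b := x) (fun t => Real.exp t)
      rw [this, neg_zero, integral_exp]
      simp; ring
    rw [h0] at hs
    rw [hIcc, hval] at hs
    linarith

lemma lap_total : ∫ t, lap t = 1 := by
  have := intervalIntegral.integral_Iic_add_Ioi (b := (0:ℝ)) (lap_integrableOn_Iic 0) (lap_integrableOn_Ioi 0)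
  have h1 : ∫ t in Iic (0:ℝ), lap t = 1/2 := by rw [lap_Iic]; norm_num
  have h2 : ∫ t in Ioi (0:ℝ), lap t = 1/2 := by
    rw [setIntegral_congr_fun measurableSet_Ioi (g := fun t => (1/2) * Real.exp (-t))
      (fun t ht => by unfold lap; rw [abs_of_nonneg (le_of_lt ht)])]
    rw [integral_const_mul, integral_exp_neg_Ioi]; norm_num
  rw [h1, h2] at this; linarith

lemma lap_Ici (a : ℝ) : ∫ t in Ici a, lap t = if a ≤ 0 then 1 - Real.exp a / 2 else Real.exp (-a) / 2 := by
  rw [integral_Ici_eq_integral_Ioi]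
  have hs := intervalIntegral.integral_Iic_add_Ioi (b := a) (lap_integrableOn_Iic a) (lap_integrableOn_Ioi a)
  rw [lap_total, lap_Iic] at hs
  by_cases ha : a ≤ 0
  · rw [if_pos ha] at hs ⊢; linarith
  · rw [if_neg ha] at hs ⊢; linarith

lemma lap_Ici_nonpos {a : ℝ} (ha : a ≤ 0) : ∫ t in Ici a, lap t = 1 - Real.exp a / 2 := by
  rw [lap_Ici, if_pos ha]

lemma lap_Ici_nonneg {a : ℝ} (ha : 0 ≤ a) : ∫ t in Ici a, lap t = Real.exp (-a) / 2 := by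
  rw [lap_Ici]
  by_cases h : a ≤ 0
  · have : a = 0 := le_antisymm h ha
    simp [this]; norm_num
  · rw [if_neg h]

lemma lap_shift_Ici (θ a : ℝ) : ∫ t in Ici a, lap (t - θ) = ∫ t in Ici (a - θ), lap t := by
  rw [← integral_indicator measurableSet_Ici, ← integral_indicator measurableSet_Ici]
  have key : ∀ t, (Ici a).indicator (fun t => lap (t - θ)) t = (Ici (a - θ)).indicator lap (t - θ) := by
    intro t
    by_cases h : a ≤ t <;>
      simp [indicator_apply, mem_Ici, h, sub_le_sub_iff_right]
  simp_rw [key]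
  exact integral_sub_right_eq_self ((Ici (a - θ)).indicator lap) θ

/-- In the one-sided Laplace location model with shift `θ > 0`,
the cdf of one-sided p-values under the alternative (the law of `1 - F0 X`
where `X` has density `f1(t) = ½ e^{-|t-θ|}`) is piecewise:
`u e^θ` on `[0, ½e^{-θ}]`, `1 - e^{-θ}/(4u)` on `[½e^{-θ}, ½]`, and
`1 - (1-u)e^{-θ}` on `[½, 1]`. -/
theorem laplace_one_sided_pvalue_cdf
    (θ : ℝ) (hθ : 0 < θ)
    (F0 : ℝ → ℝ)
    (hF0 : ∀ x, F0 x = ∫ t in Iic x, (1/2) * Real.exp (-|t|))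
    (μ1 : Measure ℝ)
    (hμ1 : μ1 = volume.withDensity
      (fun t => ENNReal.ofReal ((1/2) * Real.exp (-|t - θ|))))
    (G1 : ℝ → ℝ)
    (hG1 : ∀ u, G1 u = (μ1 {x | 1 - F0 x ≤ u}).toReal) :
    (∀ u, 0 ≤ u → u ≤ Real.exp (-θ) / 2 → G1 u = u * Real.exp θ) ∧
      (∀ u, Real.exp (-θ) / 2 ≤ u → u ≤ 1/2 →
        G1 u = 1 - Real.exp (-θ) / (4 * u)) ∧
      (∀ u, 1/2 ≤ u → u ≤ 1 → G1 u = 1 - (1 - u) * Real.exp (-θ)) := by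
  have hF0' : ∀ x, F0 x = if x ≤ 0 then Real.exp x / 2 else 1 - Real.exp (-x) / 2 := by
    intro x; rw [hF0 x, ← lap_Iic x]; rfl
  have hmono : StrictMono F0 := by
    intro x y hxy
    rw [hF0' x, hF0' y]
    by_cases hx : x ≤ 0 <;> by_cases hy : y ≤ 0
    · rw [if_pos hx, if_pos hy]
      have := Real.exp_lt_exp.2 hxy; linarith
    · rw [if_pos hx, if_neg hy]
      push_neg at hy
      have h1 : Real.exp x ≤ 1 := Real.exp_le_one_iff.2 hx
      have h2 : Real.exp (-y) < 1 := Real.exp_lt_one_iff.2 (by linarith)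
      linarith
    · exact absurd (hxy.trans_le hy) (not_lt.2 (le_of_not_ge hx))
    · rw [if_neg hx, if_neg hy]
      have := Real.exp_lt_exp.2 (neg_lt_neg hxy); linarith
  have hlt1 : ∀ x, F0 x < 1 := by
    intro x; rw [hF0' x]
    by_cases hx : x ≤ 0
    · rw [if_pos hx]
      have : Real.exp x ≤ 1 := Real.exp_le_one_iff.2 hx
      linarith
    · rw [if_neg hx]; have := Real.exp_pos (-x); linarith
  have hge0 : ∀ x, 0 ≤ F0 x := by
    intro x; rw [hF0' x]
    by_cases hx : x ≤ 0
    · rw [if_pos hx]; positivity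
    · rw [if_neg hx]
      push_neg at hx
      have : Real.exp (-x) < 1 := Real.exp_lt_one_iff.2 (by linarith)
      linarith
  have hval : ∀ s : Set ℝ, MeasurableSet s → (μ1 s).toReal = ∫ t in s, lap (t - θ) := by
    intro s hs
    rw [hμ1, withDensity_apply _ hs]
    have hfun : (fun t : ℝ => ENNReal.ofReal ((1/2) * Real.exp (-|t - θ|)))
        = fun t => ENNReal.ofReal (lap (t - θ)) := rfl
    rw [hfun, ← ofReal_integral_eq_lintegral_ofReal ((lap_int.comp_sub_right θ)).integrableOn
      (ae_of_all _ fun t => lap_nonneg (t - θ)),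
      ENNReal.toReal_ofReal (setIntegral_nonneg hs fun t _ => lap_nonneg _)]
  have hG1c : ∀ u c, F0 c = 1 - u → G1 u = ∫ t in Ici (c - θ), lap t := by
    intro u c hc
    have hset : {x | 1 - F0 x ≤ u} = Ici c := by
      ext x
      simp only [mem_setOf_eq, mem_Ici]
      constructor
      · intro h
        exact hmono.le_iff_le.1 (by rw [hc]; linarith)
      · intro h
        have := hmono.le_iff_le.2 h
        rw [hc] at this; linarith
    rw [hG1 u, hset, hval _ measurableSet_Ici, lap_shift_Ici]
  refine ⟨?_, ?_, ?_⟩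
  · intro u hu0 hu
    rcases eq_or_lt_of_le hu0 with rfl | hu0
    · have hset : {x | 1 - F0 x ≤ (0:ℝ)} = ∅ := by
        ext x; simp only [mem_setOf_eq, mem_empty_iff_false, iff_false, not_le]
        linarith [hlt1 x]
      rw [hG1 0, hset, measure_empty]; simp
    · set c := -Real.log (2*u) with hcdef
      have h2u : 0 < 2*u := by linarith
      have hcθ : θ ≤ c := by
        rw [hcdef, le_neg]
        exact (Real.log_le_iff_le_exp h2u).2 (by linarith)
      have hc : F0 c = 1 - u := by
        rw [hF0' c, if_neg (by push_neg; linarith : ¬ c ≤ 0)]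
        have : Real.exp (-c) = 2*u := by rw [hcdef, neg_neg, Real.exp_log h2u]
        rw [this]; ring
      have he : Real.exp (-(c - θ)) = Real.exp θ * (2*u) := by
        have h1 : -(c - θ) = θ + Real.log (2*u) := by rw [hcdef]; ring
        rw [h1, Real.exp_add, Real.exp_log h2u]
      rw [hG1c u c hc, lap_Ici_nonneg (by linarith), he]; ring
  · intro u h1 h2
    have h2u : 0 < 2*u := by have := Real.exp_pos (-θ); linarith
    set c := -Real.log (2*u) with hcdef
    have hcθ : c ≤ θ := by
      rw [hcdef, neg_le]
      exact (Real.le_log_iff_exp_le h2u).2 (by linarith)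
    have hc0 : 0 ≤ c := by
      rw [hcdef, le_neg, neg_zero]
      exact Real.log_nonpos (by linarith) (by linarith)
    have hc : F0 c = 1 - u := by
      rw [hF0' c]
      by_cases h : c ≤ 0
      · have hc0' : c = 0 := le_antisymm h hc0
        have hlog : Real.log (2*u) = 0 := by
          have : -Real.log (2*u) = 0 := by rw [← hcdef, hc0']
          linarith
        have h2u1 : 2*u = 1 := by
          have := Real.exp_log h2u
          rw [hlog, Real.exp_zero] at this; linarith
        rw [if_pos h, hc0', Real.exp_zero]; linarith
      · rw [if_neg h]
        have : Real.exp (-c) = 2*u := by rw [hcdef, neg_neg, Real.exp_log h2u]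
        rw [this]; ring
    have he : Real.exp (c - θ) = Real.exp (-θ) / (2*u) := by
      have h1 : c - θ = -θ - Real.log (2*u) := by rw [hcdef]; ring
      rw [h1, Real.exp_sub, Real.exp_log h2u]
    rw [hG1c u c hc, lap_Ici_nonpos (by linarith), he]
    have hu0 : u ≠ 0 := ne_of_gt (by linarith)
    field_simp
    ring
  · intro u h1 h2
    rcases eq_or_lt_of_le h2 with rfl | h2
    · have hset : {x | 1 - F0 x ≤ (1:ℝ)} = univ := by
        ext x; simp only [mem_setOf_eq, mem_univ, iff_true]
        linarith [hge0 x]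
      rw [hG1 1, hset, hval _ MeasurableSet.univ, setIntegral_univ,
        integral_sub_right_eq_self lap θ, lap_total]
      simp
    · set c := Real.log (2*(1-u)) with hcdef
      have h2u : 0 < 2*(1-u) := by linarith
      have hc0 : c ≤ 0 := Real.log_nonpos (by linarith) (by linarith)
      have hc : F0 c = 1 - u := by
        rw [hF0' c, if_pos hc0, hcdef, Real.exp_log h2u]; ring
      have he : Real.exp (c - θ) = 2*(1-u)*Real.exp (-θ) := by
        rw [show c - θ = c + (-θ) from by ring, Real.exp_add, hcdef, Real.exp_log h2u]
      rw [hG1c u c hc, lap_Ici_nonpos (by linarith), he]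
      ring
end

section
/- In the one-sided Laplace location model with shift $\theta > 0$ and mixture distribution $G(u) = \pi_0 u + (1-\pi_0) G_1^+(u)$ with $\pi_0 \in [0,1)$, the critical value $\alpha^\star = \inf_{u \in (0,1]} u/G(u)$ equals $\left(\pi_0 + (1-\pi_0)e^{\theta}\right)^{-1}$, and in particular is strictly positive. -/
open Set

/-- In the one-sided Laplace model, the critical value
`α⋆ = inf_{u ∈ (0,1]} u / G(u)` of the BH95 procedure equals
`(π₀ + (1-π₀)e^θ)⁻¹ > 0`, where `G = π₀·Id + (1-π₀)·G1⁺`. -/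
theorem laplace_critical_value
    (θ : ℝ) (hθ : 0 < θ) (π0 : ℝ) (hπ0 : π0 ∈ Ico (0:ℝ) 1)
    (G1 : ℝ → ℝ)
    (hG1a : ∀ u, 0 ≤ u → u ≤ Real.exp (-θ) / 2 → G1 u = u * Real.exp θ)
    (hG1b : ∀ u, Real.exp (-θ) / 2 ≤ u → u ≤ 1/2 →
      G1 u = 1 - Real.exp (-θ) / (4 * u))
    (hG1c : ∀ u, 1/2 ≤ u → u ≤ 1 → G1 u = 1 - (1 - u) * Real.exp (-θ))
    (G : ℝ → ℝ) (hG : ∀ u, G u = π0 * u + (1 - π0) * G1 u) :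
    sInf ((fun u => u / G u) '' Ioc (0:ℝ) 1)
        = (π0 + (1 - π0) * Real.exp θ)⁻¹ ∧
      0 < (π0 + (1 - π0) * Real.exp θ)⁻¹ := by
  obtain ⟨hπ0a, hπ0b⟩ := hπ0
  set E := Real.exp θ with hEdef
  have hE : 1 < E := by
    have := Real.add_one_lt_exp (ne_of_gt hθ)
    simpa [hEdef] using by linarith
  have hE0 : 0 < E := by linarith
  have he' : 0 < Real.exp (-θ) := Real.exp_pos _
  have he'1 : Real.exp (-θ) < 1 := by
    rw [Real.exp_lt_one_iff]; linarith
  have hEE : Real.exp (-θ) * E = 1 := by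
    rw [hEdef, ← Real.exp_add]; simp
  set c := π0 + (1 - π0) * E with hcdef
  have hc1 : 1 < c := by nlinarith
  have hc0 : 0 < c := by linarith
  -- lower bound
  have hlb : ∀ x ∈ (fun u => u / G u) '' Ioc (0:ℝ) 1, c⁻¹ ≤ x := by
    rintro x ⟨u, ⟨hu0, hu1⟩, rfl⟩
    -- key: G1 u ≤ E * u and 0 < G u on each piece
    have key : G1 u ≤ E * u ∧ 0 < G u := by
      rcases le_or_gt u (Real.exp (-θ) / 2) with h1 | h1
      · have hg : G1 u = u * E := hG1a u hu0.le h1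
        constructor
        · rw [hg]; linarith [mul_comm u E]
        · rw [hG, hg]; nlinarith
      · rcases le_or_gt u (1/2) with h2 | h2
        · have hg : G1 u = 1 - Real.exp (-θ) / (4 * u) := hG1b u h1.le h2
          have h4u : (0:ℝ) < 4 * u := by linarith
          have hv : Real.exp (-θ) / (4 * u) * (4 * u) = Real.exp (-θ) :=
            div_mul_cancel₀ _ (ne_of_gt h4u)
          have hvle : Real.exp (-θ) / (4 * u) ≤ 1 / 2 := by
            rw [div_le_div_iff₀ h4u two_pos]; linarith
          constructor
          · rw [hg]
            nlinarith [sq_nonneg (2 * E * u - 1), mul_pos hE0 hu0, hv, hEE]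
          · rw [hG, hg]; nlinarith
        · have hg : G1 u = 1 - (1 - u) * Real.exp (-θ) := hG1c u h2.le hu1
          constructor
          · rw [hg]
            nlinarith [hEE, mul_nonneg (by linarith : (0:ℝ) ≤ E - 1)
              (by linarith : (0:ℝ) ≤ 2 * u - 1)]
          · rw [hG, hg]
            have : (1 - u) * Real.exp (-θ) ≤ (1/2) * 1 :=
              mul_le_mul (by linarith) he'1.le he'.le (by norm_num)
            nlinarith [mul_nonneg hπ0a hu0.le]
    obtain ⟨hkey, hGpos⟩ := key
    have hGle : G u ≤ c * u := by rw [hG]; nlinarith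
    rw [inv_eq_one_div, div_le_div_iff₀ hc0 hGpos]
    nlinarith
  -- membership: attained at u = exp(-θ)/2
  have hmem : c⁻¹ ∈ (fun u => u / G u) '' Ioc (0:ℝ) 1 := by
    refine ⟨Real.exp (-θ) / 2, ⟨by positivity, by linarith⟩, ?_⟩
    have hg : G1 (Real.exp (-θ) / 2) = (Real.exp (-θ) / 2) * E :=
      hG1a _ (by positivity) le_rfl
    have hu0 : Real.exp (-θ) / 2 ≠ 0 := by positivity
    show Real.exp (-θ) / 2 / G (Real.exp (-θ) / 2) = c⁻¹
    rw [hG, hg]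
    rw [show π0 * (Real.exp (-θ) / 2) + (1 - π0) * (Real.exp (-θ) / 2 * E)
        = (Real.exp (-θ) / 2) * c by rw [hcdef]; ring]
    field_simp
  exact ⟨(IsLeast.csInf_eq ⟨hmem, hlb⟩), inv_pos.mpr hc0⟩
end
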